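/- arXiv:1711.01653 — 3 statements merged into one kernel-verified Lean document; each statement's English description precedes it below -/
import Mathlib

section
/- Let B be a simple Bratteli diagram with full group G=G_B and path space X=X_B. For any clopen sets A,C⊆X with A∪C≠X, the subgroup G°(A∩C) is generated by G°(A) and G°(C), i.e., G°(A∩C)=⟨G°(A),G°(C)⟩. -/
open MeasureTheory Filter
open scoped ENNReal ComplexOrder

noncomputable section

/-- A Bratteli diagram: vertex levels `V i`, edge levels `E i` (edges from `V i` to `V (i+1)`),
all levels finite and nonempty, a single root vertex, and source/range maps that are
surjective (every vertex emits and receives an edge). -/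
structure BratteliDiagram where
  V : ℕ → Type
  E : ℕ → Type
  fintypeV : ∀ i, Fintype (V i)
  fintypeE : ∀ i, Fintype (E i)
  nonemptyV : ∀ i, Nonempty (V i)
  nonemptyE : ∀ i, Nonempty (E i)
  subsingleton_root : Subsingleton (V 0)
  src : ∀ i, E i → V i
  rng : ∀ i, E i → V (i + 1)
  src_surj : ∀ i, Function.Surjective (src i)
  rng_surj : ∀ i, Function.Surjective (rng i)

namespace BratteliDiagram

variable (B : BratteliDiagram)

/-- The path space `X_B`: infinite paths starting at the root. -/
def Path : Type :=
  { x : ∀ i, B.E i // ∀ i, B.rng i (x i) = B.src (i + 1) (x (i + 1)) }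

instance (i : ℕ) : UniformSpace (B.E i) := ⊥

instance instUniformSpacePath : UniformSpace B.Path :=
  inferInstanceAs (UniformSpace { x : ∀ i, B.E i // ∀ i, B.rng i (x i) = B.src (i + 1) (x (i + 1)) })

instance instMeasurableSpacePath : MeasurableSpace B.Path := borel _

/-- Finite segments of `L+1` consecutive edges starting at level `n`. -/
def Seg (n L : ℕ) : Type :=
  { f : ∀ i : Fin (L + 1), B.E (n + (i : ℕ)) //
    ∀ (i : ℕ) (hi : i < L),
      B.rng (n + i) (f ⟨i, by omega⟩) = B.src (n + (i + 1)) (f ⟨i + 1, by omega⟩) }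

/-- The number of finite paths connecting `v ∈ V n` to `w ∈ V (n + L + 1)`. -/
def numPaths (n L : ℕ) (v : B.V n) (w : B.V (n + L + 1)) : ℕ :=
  Nat.card { f : B.Seg n L //
    B.src n (f.1 ⟨0, by omega⟩) = v ∧ B.rng (n + L) (f.1 ⟨L, by omega⟩) = w }

/-- A Bratteli diagram is simple if every vertex of a given level is connected
to every vertex of some deeper level. -/
def IsSimple : Prop :=
  ∀ n : ℕ, ∃ L : ℕ, ∀ (v : B.V n) (w : B.V (n + L + 1)), 0 < B.numPaths n L v w

/-- A Bratteli diagram is even if every vertex of a given level is connected to every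
vertex of some deeper level by a (positive) even number of paths. -/
def IsEven : Prop :=
  ∀ n : ℕ, ∃ L : ℕ, ∀ (v : B.V n) (w : B.V (n + L + 1)),
    0 < B.numPaths n L v w ∧ Even (B.numPaths n L v w)

/-- A permutation of the path space "of level `n`": it changes only the first `n` edges,
and what it does to the first `n` edges depends only on the first `n` edges. -/
def IsLevel (n : ℕ) (g : Equiv.Perm B.Path) : Prop :=
  (∀ (x : B.Path) (i : ℕ), n ≤ i → (g x).1 i = x.1 i) ∧
  (∀ x y : B.Path, (∀ i : ℕ, i < n → x.1 i = y.1 i) → ∀ i : ℕ, i < n → (g x).1 i = (g y).1 i)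

theorem isLevel_one (n : ℕ) : B.IsLevel n 1 :=
  ⟨fun _ _ _ => rfl, fun _ _ h i hi => h i hi⟩

theorem IsLevel.mul {n : ℕ} {a b : Equiv.Perm B.Path} (ha : B.IsLevel n a)
    (hb : B.IsLevel n b) : B.IsLevel n (a * b) := by
  constructor
  · intro x i hi
    have h1 := ha.1 (b x) i hi
    have h2 := hb.1 x i hi
    simpa [Equiv.Perm.mul_apply] using h1.trans h2
  · intro x y hxy i hi
    have h2 := hb.2 x y hxy
    have := ha.2 (b x) (b y) h2 i hi
    simpa [Equiv.Perm.mul_apply] using this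

theorem IsLevel.mono {n m : ℕ} (hnm : n ≤ m) {g : Equiv.Perm B.Path}
    (h : B.IsLevel n g) : B.IsLevel m g := by
  refine ⟨fun x i hi => h.1 x i (hnm.trans hi), fun x y hxy i hi => ?_⟩
  rcases lt_or_ge i n with h' | h'
  · exact h.2 x y (fun j hj => hxy j (hj.trans_le hnm)) i h'
  · rw [h.1 x i h', h.1 y i h']
    exact hxy i hi

/-- The group `G_n` of homeomorphisms of the path space permuting only the
first `n` edges of infinite paths. -/
def level (n : ℕ) : Subgroup (Equiv.Perm B.Path) where
  carrier := { g | B.IsLevel n g ∧ B.IsLevel n g⁻¹ }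
  one_mem' := ⟨B.isLevel_one n, by simpa using B.isLevel_one n⟩
  mul_mem' := by
    intro a b ha hb
    exact ⟨ha.1.mul B hb.1, by rw [mul_inv_rev]; exact IsLevel.mul B hb.2 ha.2⟩
  inv_mem' := by
    intro a ha
    exact ⟨ha.2, by simpa using ha.1⟩

theorem level_mono {n m : ℕ} (h : n ≤ m) : B.level n ≤ B.level m := by
  intro g hg
  exact ⟨hg.1.mono B h, hg.2.mono B h⟩

/-- The full group `G_B = ⋃ n, G_n` of the Bratteli diagram. -/
def fullGroup : Subgroup (Equiv.Perm B.Path) where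
  carrier := { g | ∃ n, g ∈ B.level n }
  one_mem' := ⟨0, one_mem _⟩
  mul_mem' := by
    rintro a b ⟨n, ha⟩ ⟨m, hb⟩
    exact ⟨max n m, mul_mem (B.level_mono (le_max_left n m) ha)
      (B.level_mono (le_max_right n m) hb)⟩
  inv_mem' := by
    rintro a ⟨n, ha⟩
    exact ⟨n, inv_mem ha⟩

/-- `G_n` viewed as a subgroup of the full group. -/
def levelIn (n : ℕ) : Subgroup ↥B.fullGroup := (B.level n).comap B.fullGroup.subtype

/-- The subgroup `G°(A)` of elements of the full group fixing `A` pointwise. -/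
def Gcirc (A : Set B.Path) : Subgroup ↥B.fullGroup :=
  ⨅ x ∈ A, MulAction.stabilizer ↥B.fullGroup x

/-- `G°_n(A) = G_n ∩ G°(A)`. -/
def GcircN (n : ℕ) (A : Set B.Path) : Subgroup ↥B.fullGroup :=
  B.levelIn n ⊓ B.Gcirc A

end BratteliDiagram

/-- Conjugation of a subgroup: `g • H = gHg⁻¹`. -/
def conjSub {Γ : Type*} [Group Γ] (g : Γ) (H : Subgroup Γ) : Subgroup Γ :=
  Subgroup.map (MulAut.conj g).toMonoidHom H

/-- The Borel structure on the space `Sub(Γ)` of subgroups of `Γ`,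
induced from the product space `{0,1}^Γ` (equivalently `Set Γ`). -/
instance subgroupMeasurableSpace {Γ : Type*} [Group Γ] : MeasurableSpace (Subgroup Γ) :=
  MeasurableSpace.comap (fun H => (H : Set Γ)) inferInstance

namespace BratteliDiagram

variable (B : BratteliDiagram)

/-- `F(A)`: the collection of subgroups of the full group normalized by `G°(A)`. -/
def FF (A : Set B.Path) : Set (Subgroup ↥B.fullGroup) :=
  { H | ∀ g ∈ B.Gcirc A, conjSub g H = H }

end BratteliDiagram

/-- A measure `ν` on `Y` is invariant under the action of `G`. -/
def MeasInv (G : Type*) [Group G] {Y : Type*} [MeasurableSpace Y] [MulAction G Y]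
    (ν : Measure Y) : Prop :=
  ∀ (g : G) (s : Set Y), MeasurableSet s → ν ((fun y => g • y) ⁻¹' s) = ν s

/-- The action of `G` on `(Y, ν)` is ergodic: every invariant measurable set is null or conull. -/
def MeasErg (G : Type*) [Group G] {Y : Type*} [MeasurableSpace Y] [MulAction G Y]
    (ν : Measure Y) : Prop :=
  ∀ s : Set Y, MeasurableSet s → (∀ g : G, (fun y => g • y) ⁻¹' s = s) → ν s = 0 ∨ ν s = 1

/-- An invariant random subgroup: a conjugation-invariant Borel probability measure on `Sub(G)`. -/
def IsIRS (G : Type*) [Group G] (φ : Measure (Subgroup G)) : Prop :=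
  IsProbabilityMeasure φ ∧
    ∀ (g : G) (s : Set (Subgroup G)), MeasurableSet s → φ (conjSub g ⁻¹' s) = φ s

/-- An ergodic invariant random subgroup. -/
def IsErgodicIRS (G : Type*) [Group G] (φ : Measure (Subgroup G)) : Prop :=
  IsIRS G φ ∧
    ∀ s : Set (Subgroup G), MeasurableSet s → (∀ g : G, conjSub g ⁻¹' s = s) →
      φ s = 0 ∨ φ s = 1

/-- A character of a group: normalized, central, positive semidefinite complex function. -/
def IsCharacter (G : Type*) [Group G] (χ : G → ℂ) : Prop :=
  χ 1 = 1 ∧ (∀ a b : G, χ (a * b) = χ (b * a)) ∧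
    ∀ (n : ℕ) (g : Fin n → G) (c : Fin n → ℂ),
      0 ≤ ∑ i, ∑ j, (starRingEnd ℂ) (c i) * c j * χ (g i * (g j)⁻¹)

namespace BratteliDiagram

variable (B : BratteliDiagram)

/-- The product measure `μ_α = μ_1^{α_1} × ⋯ × μ_k^{α_k}` on `X^{|α|}`,
realized on the index type `Σ i : Fin k, Fin (α i)` (of cardinality `|α| = Σ α i`). -/
def prodMeasure {k : ℕ} (μ : Fin k → Measure B.Path) (α : Fin k → ℕ) :
    Measure ((Σ i : Fin k, Fin (α i)) → B.Path) :=
  Measure.pi fun p => μ p.1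

/-- The stabilizer distribution `φ_α` of the diagonal action of the full group
on `(X^{|α|}, μ_α)`. -/
def stabDist {k : ℕ} (μ : Fin k → Measure B.Path) (α : Fin k → ℕ) :
    Measure (Subgroup ↥B.fullGroup) :=
  Measure.map (fun y => MulAction.stabilizer ↥B.fullGroup y) (B.prodMeasure μ α)

end BratteliDiagram

/-!
An element `g` of `G°(A ∩ C)` lies in some `G_N`, and for `N` large both `A` and `C` are unions of
level-`N` cylinders. So `g` is a permutation of the level-`N` cylinders which preserves their
terminal vertices and fixes the cylinders in `A ∩ C`; such a permutation is a product of
transpositions of cylinders with a common terminal vertex, both outside `A ∩ C`. Since `A ∪ C`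
misses a cylinder, simplicity gives, for `N` large, a cylinder `r` outside `A ∪ C` ending at every
vertex of level `N`. A transposition `(a b)` is then generated by `(a r)` and `(r b)`, and each of
these fixes `A` or `C` pointwise.
-/

open Equiv MulAction

section FiberPerm

variable {α β : Type*}

def fiberPerm (f : α → β) : Subgroup (Perm α) where
  carrier := {σ | ∀ a, f (σ a) = f a}
  one_mem' _ := rfl
  mul_mem' hσ hτ a := (hσ _).trans (hτ a)
  inv_mem' {σ} hσ a := by simpa using (hσ (σ⁻¹ a)).symm

theorem swap_mem_fiberPerm [DecidableEq α] {f : α → β} {a b : α} (h : f a = f b) :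
    swap a b ∈ fiberPerm f := by
  intro x
  rcases eq_or_ne x a with rfl | hxa
  · rw [swap_apply_left, h]
  rcases eq_or_ne x b with rfl | hxb
  · rw [swap_apply_right, h]
  · rw [swap_apply_of_ne_of_ne hxa hxb]

theorem swap_mem_fixingSubgroup_fiberPerm [DecidableEq α] {f : α → β} {s : Set α} {a b : α}
    (h : f a = f b) (ha : a ∉ s) (hb : b ∉ s) :
    (⟨swap a b, swap_mem_fiberPerm h⟩ : fiberPerm f) ∈ fixingSubgroup (fiberPerm f) s :=
  (mem_fixingSubgroup_iff _).2 fun _ hy =>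
    swap_apply_of_ne_of_ne (ne_of_mem_of_not_mem hy ha) (ne_of_mem_of_not_mem hy hb)

theorem fixingSubgroup_fiberPerm_inter [Finite α] {f : α → β} {s t : Set α}
    (hfree : ∀ a, ∃ r, f r = f a ∧ r ∉ s ∪ t) :
    fixingSubgroup (fiberPerm f) (s ∩ t) =
      fixingSubgroup (fiberPerm f) s ⊔ fixingSubgroup (fiberPerm f) t := by
  classical
  refine le_antisymm (fun π hπ => ?_) (sup_le (fixingSubgroup_antitone _ _ Set.inter_subset_left)
    (fixingSubgroup_antitone _ _ Set.inter_subset_right))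
  set H := (fixingSubgroup (fiberPerm f) s ⊔ fixingSubgroup (fiberPerm f) t).map
    (fiberPerm f).subtype
  have swap_free : ∀ a r, f a = f r → a ∉ s ∩ t → r ∉ s ∪ t → swap a r ∈ H := by
    intro a r h ha hr
    refine ⟨⟨swap a r, swap_mem_fiberPerm h⟩, ?_, rfl⟩
    rw [Set.mem_union, not_or] at hr
    rcases not_and_or.1 ha with has | hat
    · exact Subgroup.mem_sup_left (swap_mem_fixingSubgroup_fiberPerm h has hr.1)
    · exact Subgroup.mem_sup_right (swap_mem_fixingSubgroup_fiberPerm h hat hr.2)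
  have swap_mem : ∀ a, (π : Perm α) a ≠ a → swap a ((π : Perm α) a) ∈ H := by
    intro a ha
    obtain ⟨r, hr, hrst⟩ := hfree a
    have hπa : f ((π : Perm α) a) = f a := π.2 a
    have ha' : a ∉ s ∩ t := fun h => ha ((mem_fixingSubgroup_iff _).1 hπ a h)
    have hπa' : (π : Perm α) a ∉ s ∩ t := fun h =>
      ha ((π : Perm α).injective ((mem_fixingSubgroup_iff _).1 hπ _ h))
    refine SubmonoidClass.swap_mem_trans H (swap_free a r hr.symm ha' hrst) ?_
    rw [swap_comm]
    exact swap_free _ r (hπa.trans hr.symm) hπa' hrst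
  have hπ_closure : (π : Perm α) ∈ Subgroup.closure {σ | σ.IsSwap ∧ σ ∈ H} := by
    refine (mem_closure_isSwap fun _ h => h.1).2 ⟨Set.toFinite _, fun a => ?_⟩
    by_cases ha : (π : Perm α) a = a
    · rw [ha]
      exact mem_orbit_self a
    · exact ⟨⟨_, Subgroup.subset_closure ⟨⟨a, _, Ne.symm ha, rfl⟩, swap_mem a ha⟩⟩,
        swap_apply_left a _⟩
  exact (Subgroup.mem_map_iff_mem (Subgroup.subtype_injective _)).1
    ((Subgroup.closure_le _).2 (fun _ h => h.2) hπ_closure)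

end FiberPerm

namespace BratteliDiagram

variable (B : BratteliDiagram)

instance (i : ℕ) : Fintype (B.E i) := B.fintypeE i

instance (i : ℕ) : DiscreteTopology (B.E i) := ⟨rfl⟩

def vertexAt (N : ℕ) (x : B.Path) : B.V N := B.src N (x.1 N)

def cylSetoid (N : ℕ) : Setoid B.Path where
  r x y := ∀ i < N, x.1 i = y.1 i
  iseqv := ⟨fun _ _ _ => rfl, fun h i hi => (h i hi).symm,
    fun h h' i hi => (h i hi).trans (h' i hi)⟩

/-- The level-`N` cylinder sets, i.e. the finite paths of length `N` from the root. -/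
abbrev Cylinder (N : ℕ) : Type := Quotient (B.cylSetoid N)

def cyl (N : ℕ) (x : B.Path) : B.Cylinder N := Quotient.mk _ x

variable {B}

theorem cyl_eq_cyl {N : ℕ} {x y : B.Path} : B.cyl N x = B.cyl N y ↔ ∀ i < N, x.1 i = y.1 i :=
  Quotient.eq

theorem cyl_surjective (N : ℕ) : Function.Surjective (B.cyl N) := Quotient.mk_surjective

theorem cyl_eq_cyl_of_le {M N : ℕ} (h : M ≤ N) {x y : B.Path} (hxy : B.cyl N x = B.cyl N y) :
    B.cyl M x = B.cyl M y :=
  cyl_eq_cyl.2 fun i hi => cyl_eq_cyl.1 hxy i (hi.trans_le h)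

instance (N : ℕ) : Finite (B.Cylinder N) :=
  Finite.of_injective
    (Quotient.lift (fun x (i : Fin N) => x.1 i) fun _ _ h => funext fun i => h i i.2)
    fun p q => Quotient.inductionOn₂ p q fun _ _ h =>
      Quotient.sound fun i hi => congrFun h ⟨i, hi⟩

theorem vertexAt_eq_of_cyl_eq {N : ℕ} {x y : B.Path} (h : B.cyl N x = B.cyl N y) :
    B.vertexAt N x = B.vertexAt N y := by
  cases N with
  | zero => exact Subsingleton.elim (h := B.subsingleton_root) _ _
  | succ M => rw [vertexAt, vertexAt, ← x.2 M, ← y.2 M, cyl_eq_cyl.1 h M M.lt_succ_self]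

variable (B) in
def cylVertex {N : ℕ} : B.Cylinder N → B.V N :=
  Quotient.lift (B.vertexAt N) fun _ _ h => vertexAt_eq_of_cyl_eq (Quotient.sound h)

variable (B) in
def splice (N : ℕ) (x y : B.Path) (h : B.vertexAt N x = B.vertexAt N y) : B.Path :=
  ⟨fun i => if i < N then x.1 i else y.1 i, fun i => by
    dsimp only
    split_ifs with h₁ h₂ h₂
    · exact x.2 i
    · obtain rfl : N = i + 1 := by omega
      exact (x.2 i).trans h
    · omega
    · exact y.2 i⟩

theorem cyl_splice {N : ℕ} {x y : B.Path} (h : B.vertexAt N x = B.vertexAt N y) :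
    B.cyl N (B.splice N x y h) = B.cyl N x :=
  cyl_eq_cyl.2 fun _ hi => if_pos hi

theorem splice_apply_of_le {N i : ℕ} {x y : B.Path} (h : B.vertexAt N x = B.vertexAt N y)
    (hi : N ≤ i) : (B.splice N x y h).1 i = y.1 i :=
  if_neg (not_lt.2 hi)

theorem eq_of_cyl_eq_of_tail {N : ℕ} {x y : B.Path} (hcyl : B.cyl N x = B.cyl N y)
    (htail : ∀ i, N ≤ i → x.1 i = y.1 i) : x = y :=
  Subtype.ext <| funext fun i => (lt_or_ge i N).elim (cyl_eq_cyl.1 hcyl i) (htail i)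

section CylPerm

variable {N : ℕ}

variable (B N) in
abbrev cylPerm : Subgroup (Perm (B.Cylinder N)) := fiberPerm (B.cylVertex (N := N))

theorem cylVertex_apply (σ : B.cylPerm N) (q : B.Cylinder N) :
    B.cylVertex ((σ : Perm (B.Cylinder N)) q) = B.cylVertex q :=
  σ.2 q

instance : SMul (B.cylPerm N) B.Path where
  smul σ x := B.splice N ((σ : Perm (B.Cylinder N)) (B.cyl N x)).out x
    ((congrArg B.cylVertex (Quotient.out_eq _)).trans (cylVertex_apply σ _))

theorem cyl_smul (σ : B.cylPerm N) (x : B.Path) :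
    B.cyl N (σ • x) = (σ : Perm (B.Cylinder N)) (B.cyl N x) :=
  (cyl_splice _).trans (Quotient.out_eq _)

theorem smul_apply_of_le (σ : B.cylPerm N) (x : B.Path) {i : ℕ} (hi : N ≤ i) :
    (σ • x).1 i = x.1 i :=
  splice_apply_of_le _ hi

instance : MulAction (B.cylPerm N) B.Path where
  one_smul x := eq_of_cyl_eq_of_tail (cyl_smul 1 x) fun _ hi => smul_apply_of_le 1 x hi
  mul_smul σ τ x := eq_of_cyl_eq_of_tail
    (by rw [cyl_smul, cyl_smul, cyl_smul]; rfl)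
    fun _ hi => by rw [smul_apply_of_le _ _ hi, smul_apply_of_le _ _ hi, smul_apply_of_le _ _ hi]

theorem isLevel_toPerm (σ : B.cylPerm N) : B.IsLevel N (toPerm σ) :=
  ⟨fun x _ hi => smul_apply_of_le σ x hi, fun x y hxy => cyl_eq_cyl.1 <| by
    rw [toPerm_apply, toPerm_apply, cyl_smul, cyl_smul, cyl_eq_cyl.2 hxy]⟩

variable (B N) in
def cylPermHom : B.cylPerm N →* B.fullGroup :=
  (toPermHom (B.cylPerm N) B.Path).codRestrict B.fullGroup fun σ =>
    ⟨N, isLevel_toPerm σ, by rw [← map_inv]; exact isLevel_toPerm σ⁻¹⟩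

theorem cylPermHom_apply (σ : B.cylPerm N) (x : B.Path) :
    (B.cylPermHom N σ : Perm B.Path) x = σ • x :=
  rfl

def levelCylPerm {g : Perm B.Path} (hg : g ∈ B.level N) : B.cylPerm N :=
  ⟨Quotient.congr g fun x y =>
      ⟨hg.1.2 x y, fun h i hi => by simpa using hg.2.2 (g x) (g y) h i hi⟩,
    fun q => Quotient.inductionOn q fun x => congrArg (B.src N) (hg.1.1 x N le_rfl)⟩

theorem levelCylPerm_cyl {g : Perm B.Path} (hg : g ∈ B.level N) (x : B.Path) :
    (levelCylPerm hg : Perm (B.Cylinder N)) (B.cyl N x) = B.cyl N (g x) :=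
  rfl

theorem cylPermHom_levelCylPerm {g : Perm B.Path} (hg : g ∈ B.level N) :
    (B.cylPermHom N (levelCylPerm hg) : Perm B.Path) = g :=
  Equiv.ext fun x => eq_of_cyl_eq_of_tail (by rw [cylPermHom_apply, cyl_smul, levelCylPerm_cyl])
    fun i hi => (smul_apply_of_le _ x hi).trans (hg.1.1 x i hi).symm

theorem mem_Gcirc_iff {g : B.fullGroup} {A : Set B.Path} :
    g ∈ B.Gcirc A ↔ ∀ x ∈ A, (g : Perm B.Path) x = x := by
  simp only [Gcirc, Subgroup.mem_iInf, mem_stabilizer_iff]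
  rfl

theorem Gcirc_antitone : Antitone B.Gcirc :=
  fun _ _ h _ hg => mem_Gcirc_iff.2 fun x hx => mem_Gcirc_iff.1 hg x (h hx)

theorem map_cylPermHom_fixingSubgroup_le (S : Set (B.Cylinder N)) :
    (fixingSubgroup (B.cylPerm N) S).map (B.cylPermHom N) ≤ B.Gcirc (B.cyl N ⁻¹' S) := by
  rintro _ ⟨σ, hσ, rfl⟩
  refine mem_Gcirc_iff.2 fun x hx => eq_of_cyl_eq_of_tail ?_ fun _ hi => smul_apply_of_le σ x hi
  rw [cylPermHom_apply, cyl_smul]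
  exact (mem_fixingSubgroup_iff _).1 hσ _ hx

theorem levelCylPerm_mem_fixingSubgroup {g : Perm B.Path} (hg : g ∈ B.level N)
    {S : Set (B.Cylinder N)} (hfix : ∀ x, B.cyl N x ∈ S → g x = x) :
    levelCylPerm hg ∈ fixingSubgroup (B.cylPerm N) S := by
  refine (mem_fixingSubgroup_iff _).2 fun q hq => ?_
  obtain ⟨x, rfl⟩ := cyl_surjective N q
  exact (levelCylPerm_cyl hg x).trans (congrArg (B.cyl N) (hfix x hq))

theorem mem_Gcirc_sup_of_mem_level {S T : Set (B.Cylinder N)}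
    (hfree : ∀ q : B.Cylinder N, ∃ r, B.cylVertex r = B.cylVertex q ∧ r ∉ S ∪ T)
    {g : B.fullGroup} (hgN : (g : Perm B.Path) ∈ B.level N)
    (hg : g ∈ B.Gcirc (B.cyl N ⁻¹' (S ∩ T))) :
    g ∈ B.Gcirc (B.cyl N ⁻¹' S) ⊔ B.Gcirc (B.cyl N ⁻¹' T) := by
  have hfix := levelCylPerm_mem_fixingSubgroup (S := S ∩ T) hgN (mem_Gcirc_iff.1 hg)
  rw [fixingSubgroup_fiberPerm_inter hfree] at hfix
  have hmap := Subgroup.mem_map_of_mem (B.cylPermHom N) hfix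
  rw [Subgroup.map_sup, Subtype.ext (cylPermHom_levelCylPerm hgN)] at hmap
  exact sup_le_sup (map_cylPermHom_fixingSubgroup_le S) (map_cylPermHom_fixingSubgroup_le T) hmap

end CylPerm

instance : CompactSpace B.Path := by
  have : IsClosed {x : ∀ i, B.E i | ∀ i, B.rng i (x i) = B.src (i + 1) (x (i + 1))} := by
    rw [Set.ofPred_forall]
    exact isClosed_iInter fun i => (isClosed_discrete
      {p : B.E i × B.E (i + 1) | B.rng i p.1 = B.src (i + 1) p.2}).preimage
      (f := fun x : (∀ j, B.E j) => (x i, x (i + 1))) (by fun_prop)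
  exact isCompact_iff_compactSpace.mp this.isCompact

theorem continuous_coord (i : ℕ) : Continuous fun x : B.Path => x.1 i :=
  (continuous_apply i).comp continuous_subtype_val

theorem isOpen_cyl_preimage (N : ℕ) (q : B.Cylinder N) : IsOpen (B.cyl N ⁻¹' {q}) := by
  obtain ⟨x, rfl⟩ := cyl_surjective N q
  have : B.cyl N ⁻¹' {B.cyl N x} =
      ⋂ i ∈ Finset.range N, (fun y : B.Path => y.1 i) ⁻¹' {x.1 i} := by
    ext y
    simp [cyl_eq_cyl]
  rw [this]
  exact isOpen_biInter_finset fun i _ => (isOpen_discrete _).preimage (continuous_coord i)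

theorem exists_cyl_preimage_subset {U : Set B.Path} (hU : IsOpen U) {x : B.Path} (hx : x ∈ U) :
    ∃ N₀, ∀ N ≥ N₀, B.cyl N ⁻¹' {B.cyl N x} ⊆ U := by
  obtain ⟨W, hW, rfl⟩ := isOpen_induced_iff.mp hU
  obtain ⟨I, u, hu, hsub⟩ := isOpen_pi_iff.mp hW x.1 hx
  refine ⟨I.sup id + 1, fun N hN y hy => hsub fun i hi => ?_⟩
  rw [cyl_eq_cyl.1 hy i (by have := Finset.le_sup (f := id) hi; simp at this; omega)]
  exact (hu i hi).2

theorem exists_eq_cyl_preimage_of_isClopen {A : Set B.Path} (hA : IsClopen A) :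
    ∃ N₀, ∀ N ≥ N₀, ∃ S : Set (B.Cylinder N), A = B.cyl N ⁻¹' S := by
  choose n hn using fun x : A => exists_cyl_preimage_subset hA.isOpen x.2
  obtain ⟨t, ht⟩ := hA.isClosed.isCompact.elim_finite_subcover
    (fun x : A => B.cyl (n x) ⁻¹' {B.cyl (n x) x}) (fun x => isOpen_cyl_preimage _ _)
    fun x hx => Set.mem_iUnion.mpr ⟨⟨x, hx⟩, rfl⟩
  refine ⟨t.sup n, fun N hN =>
    ⟨B.cyl N '' A, Set.Subset.antisymm (fun y hy => ⟨y, hy, rfl⟩) ?_⟩⟩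
  rintro y ⟨a, ha, hay⟩
  obtain ⟨x₀, hx₀t, hax₀⟩ := Set.mem_iUnion₂.mp (ht ha)
  exact hn x₀ _ le_rfl
    ((cyl_eq_cyl_of_le ((Finset.le_sup hx₀t).trans hN) hay.symm).trans hax₀)

variable (B) in
/-- Follows `q` below level `N`, then continues by arbitrary edges. -/
def extendChain (N : ℕ) (q : ∀ i, B.E i) : ∀ i, B.E i :=
  Nat.rec (q 0) fun i e => if i + 1 < N then q (i + 1) else (B.src_surj (i + 1) (B.rng i e)).choose

theorem extendChain_of_lt {N i : ℕ} (q : ∀ i, B.E i) (hi : i < N) :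
    B.extendChain N q i = q i := by
  cases i with
  | zero => rfl
  | succ j => exact if_pos hi

theorem exists_path_eq_of_chain {N : ℕ} {q : ∀ i, B.E i}
    (hq : ∀ i, i + 1 < N → B.rng i (q i) = B.src (i + 1) (q (i + 1))) :
    ∃ y : B.Path, ∀ i < N, y.1 i = q i := by
  refine ⟨⟨B.extendChain N q, fun i => ?_⟩, fun i => extendChain_of_lt q⟩
  by_cases h : i + 1 < N
  · rw [extendChain_of_lt q h, extendChain_of_lt q (Nat.lt_of_succ_lt h)]
    exact hq i h
  · have hnext : B.extendChain N q (i + 1) =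
        (B.src_surj (i + 1) (B.rng i (B.extendChain N q i))).choose := if_neg h
    rw [hnext]
    exact (B.src_surj (i + 1) _).choose_spec.symm

theorem exists_mem_vertexAt_eq {D : Set B.Path} {m L : ℕ} {z : B.Path}
    (hz : B.cyl m ⁻¹' {B.cyl m z} ⊆ D) {v : B.V (m + L + 1)}
    (hv : 0 < B.numPaths m L (B.vertexAt m z) v) :
    ∃ y ∈ D, B.vertexAt (m + L + 1) y = v := by
  obtain ⟨⟨f, hsrc, hrng⟩⟩ := (Nat.card_pos_iff.mp hv).1
  -- the first `m` edges of `z`, then the finite path `f` from level `m` to the vertex `v`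
  let q : ∀ i, B.E i := fun i =>
    if h : m ≤ i ∧ i - m < L + 1 then
      cast (congrArg B.E (show m + (i - m) = i by omega)) (f.1 ⟨i - m, h.2⟩)
    else z.1 i
  have hq_lt : ∀ i < m, q i = z.1 i := fun i hi => dif_neg (by omega)
  have hq_seg : ∀ j (hj : j < L + 1), q (m + j) = f.1 ⟨j, hj⟩ := fun j hj => by
    simp only [q, dif_pos (show m ≤ m + j ∧ m + j - m < L + 1 by omega)]
    exact eq_of_heq ((cast_heq _ _).trans (congr_arg_heq f.1 (Fin.ext (by simp))))
  have hq : ∀ i, i + 1 < m + L + 1 → B.rng i (q i) = B.src (i + 1) (q (i + 1)) := by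
    intro i hi
    rcases lt_trichotomy (i + 1) m with h | h | h
    · rw [hq_lt i (by omega), hq_lt (i + 1) h]
      exact z.2 i
    · obtain rfl := h
      rw [hq_lt i (by omega), (hq_seg 0 (by omega) : q (i + 1) = _), hsrc]
      exact z.2 i
    · obtain ⟨j, rfl⟩ : ∃ j, i = m + j := ⟨i - m, by omega⟩
      show B.rng (m + j) (q (m + j)) = B.src (m + (j + 1)) (q (m + (j + 1)))
      rw [hq_seg j (by omega), hq_seg (j + 1) (by omega)]
      exact f.2 j (by omega)
  obtain ⟨y, hy⟩ := exists_path_eq_of_chain hq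
  refine ⟨y, hz (cyl_eq_cyl.2 fun i hi => (hy i (by omega)).trans (hq_lt i hi)), ?_⟩
  rw [vertexAt, ← y.2, hy _ (by omega), hq_seg L (by omega)]
  exact hrng

end BratteliDiagram

/-- for clopen sets `A, C` with `A ∪ C ≠ X`, the group `G°(A ∩ C)` is generated
by `G°(A)` and `G°(C)`. -/
theorem Gcirc_inter_eq_sup (B : BratteliDiagram) (hsimple : B.IsSimple)
    (A C : Set B.Path) (hA : IsClopen A) (hC : IsClopen C)
    (hU : A ∪ C ≠ Set.univ) :
    B.Gcirc (A ∩ C) = B.Gcirc A ⊔ B.Gcirc C := by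
  refine le_antisymm (fun g hg => ?_) (sup_le (BratteliDiagram.Gcirc_antitone
    Set.inter_subset_left) (BratteliDiagram.Gcirc_antitone Set.inter_subset_right))
  obtain ⟨n, hgn⟩ := g.2
  obtain ⟨nA, hA'⟩ := BratteliDiagram.exists_eq_cyl_preimage_of_isClopen hA
  obtain ⟨nC, hC'⟩ := BratteliDiagram.exists_eq_cyl_preimage_of_isClopen hC
  obtain ⟨z, hz⟩ := Set.nonempty_compl.mpr hU
  obtain ⟨nz, hz'⟩ :=
    BratteliDiagram.exists_cyl_preimage_subset (hA.isClosed.union hC.isClosed).isOpen_compl hz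
  -- the level `m + L + 1` serves `g`, `A`, `C` and the cylinder of `z` avoiding `A ∪ C`
  set m := n + nA + nC + nz
  obtain ⟨L, hL⟩ := hsimple m
  obtain ⟨S, rfl⟩ := hA' (m + L + 1) (by omega)
  obtain ⟨T, rfl⟩ := hC' (m + L + 1) (by omega)
  refine BratteliDiagram.mem_Gcirc_sup_of_mem_level (fun q => ?_) (B.level_mono (by omega) hgn) hg
  obtain ⟨y, hy, hyq⟩ :=
    BratteliDiagram.exists_mem_vertexAt_eq (hz' m (by omega)) (hL _ (B.cylVertex q))
  exact ⟨B.cyl _ y, hyq, hy⟩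
end
end

section
/- Let B be a Bratteli diagram with full group G=G_B and path space X=X_B. If {C_n}_{n≥1} is a decreasing sequence of closed subsets of X and C=⋂_{n≥1}C_n, then ⋂_{n≥1}F(C_n)=F(C). -/
open MeasureTheory Filter
open scoped ENNReal ComplexOrder

noncomputable section

section Aux

variable (B : BratteliDiagram)

instance (i : ℕ) : DiscreteTopology (B.E i) :=
  ⟨rfl⟩

theorem BratteliDiagram.instCompactPath : CompactSpace B.Path := by
  have hclosed : IsClosed {x : ∀ i, B.E i |
      ∀ i, B.rng i (x i) = B.src (i + 1) (x (i + 1))} := by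
    have : {x : ∀ i, B.E i | ∀ i, B.rng i (x i) = B.src (i + 1) (x (i + 1))} =
        ⋂ i, (fun x : ∀ i, B.E i => (x i, x (i + 1))) ⁻¹'
          {p : B.E i × B.E (i + 1) | B.rng i p.1 = B.src (i + 1) p.2} := by
      ext x; simp [Set.mem_iInter]
    rw [this]
    refine isClosed_iInter fun i => IsClosed.preimage ?_ (isClosed_discrete _)
    exact (continuous_apply i).prodMk (continuous_apply (i + 1))
  have : ∀ i, Fintype (B.E i) := B.fintypeE
  have hc : IsCompact {x : ∀ i, B.E i | ∀ i, B.rng i (x i) = B.src (i + 1) (x (i + 1))} :=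
    hclosed.isCompact
  exact isCompact_iff_compactSpace.mp hc

theorem BratteliDiagram.continuous_coord_s8 (i : ℕ) :
    Continuous fun x : B.Path => x.1 i :=
  (continuous_apply i).comp continuous_subtype_val

theorem BratteliDiagram.isOpen_fix {n : ℕ} {g : Equiv.Perm B.Path}
    (hg : B.IsLevel n g) : IsOpen {x : B.Path | g x = x} := by
  rw [isOpen_iff_mem_nhds]
  intro x hx
  have hcyl : IsOpen {y : B.Path | ∀ i ∈ Finset.range n, y.1 i = x.1 i} := by
    have : {y : B.Path | ∀ i ∈ Finset.range n, y.1 i = x.1 i} =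
        ⋂ i ∈ Finset.range n, (fun y : B.Path => y.1 i) ⁻¹' {x.1 i} := by
      ext y; simp
    rw [this]
    exact isOpen_biInter_finset fun i _ =>
      (B.continuous_coord_s8 i).isOpen_preimage _ (isOpen_discrete _)
  refine mem_nhds_iff.2 ⟨_, ?_, hcyl, fun i _ => rfl⟩
  intro y hy
  have hx' : g x = x := hx
  refine Subtype.ext (funext fun i => ?_)
  rcases lt_or_ge i n with hi | hi
  · have h1 := hg.2 y x (fun j hj => hy j (Finset.mem_range.2 hj)) i hi
    have h2 : (g x).1 i = x.1 i := by rw [hx']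
    rw [h1, h2, ← hy i (Finset.mem_range.2 hi)]
  · exact hg.1 y i hi

theorem BratteliDiagram.mem_Gcirc_iff_s8 {A : Set B.Path} {g : ↥B.fullGroup} :
    g ∈ B.Gcirc A ↔ ∀ x ∈ A, g • x = x := by
  simp [BratteliDiagram.Gcirc, Subgroup.mem_iInf, MulAction.mem_stabilizer_iff]

end Aux

/-- for a decreasing sequence of closed sets `C n` with intersection `C`,
`⋂ n, F(C n) = F(C)`. -/
theorem iInter_FF_eq (B : BratteliDiagram)
    (C : ℕ → Set B.Path) (hclosed : ∀ n, IsClosed (C n)) (hdec : Antitone C) :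
    ⋂ n, B.FF (C n) = B.FF (⋂ n, C n) := by
  ext H
  simp only [Set.mem_iInter]
  constructor
  · intro hH g hg
    -- g fixes ⋂ n, C n pointwise; find n with C n ⊆ Fix g
    obtain ⟨m, hm⟩ := g.2
    have hfix : IsOpen {x : B.Path | (g : Equiv.Perm B.Path) x = x} :=
      B.isOpen_fix hm.1
    have hsub : (⋂ n, C n) ⊆ {x : B.Path | (g : Equiv.Perm B.Path) x = x} := by
      intro x hx
      exact (B.mem_Gcirc_iff_s8.1 hg) x hx
    -- compactness: decreasing closed sets minus open set
    have hcs : CompactSpace B.Path := B.instCompactPath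
    by_cases hne : ∀ n, (C n \ {x : B.Path | (g : Equiv.Perm B.Path) x = x}).Nonempty
    · exfalso
      have hd : Directed (· ⊇ ·)
          (fun n => C n \ {x : B.Path | (g : Equiv.Perm B.Path) x = x}) := by
        intro i j
        exact ⟨max i j, Set.diff_subset_diff_left (hdec (le_max_left i j)),
          Set.diff_subset_diff_left (hdec (le_max_right i j))⟩
      have hclosed' : ∀ n, IsClosed (C n \ {x : B.Path | (g : Equiv.Perm B.Path) x = x}) :=
        fun n => (hclosed n).sdiff hfix
      have hcomp : ∀ n, IsCompact (C n \ {x : B.Path | (g : Equiv.Perm B.Path) x = x}) :=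
        fun n => (hclosed' n).isCompact
      obtain ⟨x, hx⟩ := IsCompact.nonempty_iInter_of_directed_nonempty_isCompact_isClosed
        _ hd hne hcomp hclosed'
      simp only [Set.mem_iInter, Set.mem_diff] at hx
      exact (hx 0).2 (hsub (Set.mem_iInter.2 fun n => (hx n).1))
    · push_neg at hne
      obtain ⟨n, hn⟩ := hne
      rw [Set.diff_eq_empty] at hn
      refine hH n g (B.mem_Gcirc_iff_s8.2 fun x hx => ?_)
      exact hn hx
  · intro hH n g hg
    refine hH g (B.mem_Gcirc_iff_s8.2 fun x hx => ?_)
    exact (B.mem_Gcirc_iff_s8.1 hg) x (Set.mem_iInter.1 hx n)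
end
end

section
/- Let H=⋃_{n≥1}H_n be an increasing union of finite groups acting on a measure space (Y,ν) by measure-preserving transformations, and suppose that the orbit H·y is infinite for ν-almost every y∈Y. Then lim_{n→∞} (1/|H_n|) Σ_{h∈H_n} ν(Fix_Y(h)) = 0, and the sequence n ↦ (1/|H_n|) Σ_{h∈H_n} ν(Fix_Y(h)) is monotone (non-increasing). -/
open MeasureTheory Filter
open scoped ENNReal ComplexOrder

noncomputable section

/-!
By orbit–stabilizer, `(1/|K|) ∑_{h ∈ K} 1_{Fix h}(y) = |K|⁻¹ |Stab_K y| = 1/|K·y|` for a finite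
group `K`, so the `n`-th average equals `∫ 1/|H_n·y| dν(y)`. The orbits `H_n·y` increase with `n`,
which gives monotonicity, and exhaust the orbit `H·y`, which is infinite for a.e. `y`; so the
integrand decreases to `0` a.e. and dominated convergence finishes the proof.
-/

open MulAction

theorem Set.tendsto_ncard_atTop_of_monotone {α ι : Type*} [Preorder ι] [IsDirectedOrder ι]
    [Nonempty ι] {S : ι → Set α} (hmono : Monotone S) (hfin : ∀ i, (S i).Finite)
    (hinf : (⋃ i, S i).Infinite) : Tendsto (fun i => (S i).ncard) atTop atTop := by
  refine tendsto_atTop_atTop.2 fun N => ?_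
  obtain ⟨t, htS, rfl⟩ := hinf.exists_subset_card_eq N
  obtain ⟨i, hti⟩ := hmono.directed_le.exists_mem_subset_of_finset_subset_biUnion htS
  refine ⟨i, fun j hij => ?_⟩
  calc t.card = (t : Set α).ncard := (Set.ncard_coe_finset t).symm
    _ ≤ (S j).ncard := Set.ncard_le_ncard (hti.trans (hmono hij)) (hfin j)

namespace MulAction

variable {G Z : Type*} [Group G] [MulAction G Z]

theorem orbit_subgroup_mono {K L : Subgroup G} (hKL : K ≤ L) (z : Z) :
    orbit K z ⊆ orbit L z := fun _ ⟨g, hg⟩ => ⟨⟨g, hKL g.2⟩, hg⟩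

theorem iUnion_orbit_subgroup_eq_orbit {ι : Type*} {H : ι → Subgroup G}
    (hunion : ∀ g : G, ∃ i, g ∈ H i) (z : Z) : ⋃ i, orbit (H i) z = orbit G z := by
  refine subset_antisymm (Set.iUnion_subset fun i => orbit_subgroup_subset _ z) ?_
  rintro _ ⟨g, rfl⟩
  obtain ⟨i, hi⟩ := hunion g
  exact Set.mem_iUnion.2 ⟨i, ⟨g, hi⟩, rfl⟩

theorem ncard_orbit_pos [Finite G] (z : Z) : 0 < (orbit G z).ncard :=
  Set.ncard_pos (Set.finite_range _) |>.2 ⟨z, mem_orbit_self z⟩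

theorem sum_indicator_fixedBy_eq_card_stabilizer [Fintype G] (z : Z) :
    ∑ g : G, {x : Z | g • x = x}.indicator (1 : Z → ℝ) z = Nat.card (stabilizer G z) := by
  classical
  simp only [Set.indicator_apply, Set.mem_ofPred_eq, Pi.one_apply, Finset.sum_boole,
    Nat.card_eq_fintype_card, Fintype.card_subtype, mem_stabilizer_iff]

theorem inv_ncard_orbit_eq_sum_indicator_fixedBy_div [Fintype G] (z : Z) :
    ((orbit G z).ncard : ℝ)⁻¹ =
      (∑ g : G, {x : Z | g • x = x}.indicator (1 : Z → ℝ) z) / Nat.card G := by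
  have hstab : (Nat.card (stabilizer G z) : ℝ) ≠ 0 := by exact_mod_cast Nat.card_pos.ne'
  rw [sum_indicator_fixedBy_eq_card_stabilizer, ← (stabilizer G z).card_mul_index,
    index_stabilizer, Nat.cast_mul]
  field_simp

section Measure

variable [MeasurableSpace Z] (ν : Measure Z) [IsFiniteMeasure ν]

theorem integrable_inv_ncard_orbit [Fintype G]
    (hmeas : ∀ g : G, MeasurableSet {x : Z | g • x = x}) :
    Integrable (fun z => ((orbit G z).ncard : ℝ)⁻¹) ν := by
  simp_rw [inv_ncard_orbit_eq_sum_indicator_fixedBy_div]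
  exact (integrable_finsetSum _ fun g _ => (integrable_const 1).indicator (hmeas g)).div_const _

theorem integral_inv_ncard_orbit [Fintype G]
    (hmeas : ∀ g : G, MeasurableSet {x : Z | g • x = x}) :
    ∫ z, ((orbit G z).ncard : ℝ)⁻¹ ∂ν =
      (∑ g : G, (ν {x : Z | g • x = x}).toReal) / Nat.card G := by
  simp_rw [inv_ncard_orbit_eq_sum_indicator_fixedBy_div]
  rw [integral_div, integral_finsetSum _ fun g _ => (integrable_const 1).indicator (hmeas g)]
  simp_rw [integral_indicator_one (hmeas _), measureReal_def]

end Measure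

end MulAction

theorem average_fixed_points_tendsto_zero_general {G Y : Type*} [Group G] [MulAction G Y]
    [MeasurableSpace Y] (ν : Measure Y) [IsProbabilityMeasure ν]
    (H : ℕ → Subgroup G) (hmono : Monotone H) [∀ n, Fintype ↥(H n)]
    (hunion : ∀ g : G, ∃ n, g ∈ H n)
    (hmeas : ∀ g : G, MeasurableSet {y : Y | g • y = y})
    (hinf : ∀ᵐ y ∂ν, (MulAction.orbit G y).Infinite) :
    Filter.Tendsto
      (fun n => (∑ h : ↥(H n), (ν {y : Y | (h : G) • y = y}).toReal) / (Nat.card ↥(H n) : ℝ))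
      Filter.atTop (nhds 0) ∧
    Antitone
      (fun n => (∑ h : ↥(H n), (ν {y : Y | (h : G) • y = y}).toReal) / (Nat.card ↥(H n) : ℝ)) := by
  set F : ℕ → Y → ℝ := fun n y => ((orbit (H n) y).ncard : ℝ)⁻¹
  have hmeasH : ∀ n (h : H n), MeasurableSet {y : Y | h • y = y} := fun n h => hmeas h
  have hint : ∀ n, Integrable (F n) ν := fun n => integrable_inv_ncard_orbit ν (hmeasH n)
  have hanti : ∀ y, Antitone (F · y) := fun y n m hnm =>
    inv_anti₀ (by exact_mod_cast ncard_orbit_pos y) <| by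
      exact_mod_cast Set.ncard_le_ncard (orbit_subgroup_mono (hmono hnm) y) (Set.finite_range _)
  have hbound : ∀ n y, ‖F n y‖ ≤ 1 := fun n y => by
    rw [Real.norm_of_nonneg (by positivity)]
    exact inv_le_one_of_one_le₀ (by exact_mod_cast ncard_orbit_pos y)
  have hlim : ∀ᵐ y ∂ν, Tendsto (F · y) atTop (nhds 0) := by
    filter_upwards [hinf] with y hy
    refine (tendsto_natCast_atTop_atTop.comp ?_).inv_tendsto_atTop
    exact Set.tendsto_ncard_atTop_of_monotone (fun n m hnm => orbit_subgroup_mono (hmono hnm) y)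
      (fun n => Set.finite_range _) (iUnion_orbit_subgroup_eq_orbit hunion y ▸ hy)
  have haverage : ∀ n, (∑ h : ↥(H n), (ν {y : Y | (h : G) • y = y}).toReal) /
      (Nat.card ↥(H n) : ℝ) = ∫ y, F n y ∂ν := fun n =>
    (integral_inv_ncard_orbit ν (hmeasH n)).symm
  simp only [haverage]
  refine ⟨?_, fun n m hnm => integral_mono (hint m) (hint n) fun y => hanti y hnm⟩
  simpa using tendsto_integral_of_dominated_convergence (fun _ => (1 : ℝ))
    (fun n => (hint n).aestronglyMeasurable) (integrable_const 1)
    (fun n => Eventually.of_forall (hbound n)) hlim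

/-- if an increasing union `H = ⋃ H n` of finite groups acts on a probability
space with almost every orbit infinite, then the averages of the measures of fixed-point sets
over `H n` tend to `0` monotonically (non-increasingly). -/
theorem average_fixed_points_tendsto_zero {G Y : Type*} [Group G] [MulAction G Y]
    [MeasurableSpace Y] (ν : Measure Y) [IsProbabilityMeasure ν]
    (H : ℕ → Subgroup G) (hmono : Monotone H) [∀ n, Fintype ↥(H n)]
    (hunion : ∀ g : G, ∃ n, g ∈ H n)
    (hmp : ∀ (g : G) (s : Set Y), MeasurableSet s → ν ((fun y => g • y) ⁻¹' s) = ν s)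
    (hmeas : ∀ g : G, MeasurableSet {y : Y | g • y = y})
    (hinf : ∀ᵐ y ∂ν, (MulAction.orbit G y).Infinite) :
    Filter.Tendsto
      (fun n => (∑ h : ↥(H n), (ν {y : Y | (h : G) • y = y}).toReal) / (Nat.card ↥(H n) : ℝ))
      Filter.atTop (nhds 0) ∧
    Antitone
      (fun n => (∑ h : ↥(H n), (ν {y : Y | (h : G) • y = y}).toReal) / (Nat.card ↥(H n) : ℝ)) :=
  average_fixed_points_tendsto_zero_general ν H hmono hunion hmeas hinf
end
end
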